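/- arXiv:2107.02570 — 4 statements merged into one kernel-verified Lean document; each statement's English description precedes it below -/
import Mathlib

section
/- Define the monomial map φ : ℝ² × ℝ → ℝ⁷ by φ((x, y), r) = (x, y, x·y, x², y², r, r²). For every circle h = (q, s) with q ∈ ℝ² and s > 0, there exist vectors w₁, w₂ ∈ ℝ⁷ and reals b₁, b₂ such that for every closed disk d = (p, r) with p ∈ ℝ² and r ≥ 0: dist(p, q) + r ≥ s (i.e., d ∈ 𝒟(h_≥)) if and only if ⟨w₁, φ(p, r)⟩ ≥ b₁ or ⟨w₂, φ(p, r)⟩ ≥ b₂. In other words, under the lifting φ each classifier 𝒟(h_≥) becomes a union of two closed halfspaces of ℝ⁷. -/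
/-!
Since `dist p q ≥ 0`, the condition `s ≤ dist p q + r` holds iff `s ≤ r` or `(s - r)² ≤ dist p q ²`.
The first is a halfspace in the coordinate `r`; expanding `dist p q ² = (x - q₀)² + (y - q₁)²`
turns the second into an inequality that is linear in the monomials `x, y, x², y², r, r²` of
`φ((x, y), r)`.
-/

open scoped RealInnerProductSpace

noncomputable section

/-- The monomial lifting map `φ : ℝ² × ℝ → ℝ⁷`,
`φ((x, y), r) = (x, y, x·y, x², y², r, r²)`. -/
def phiLift (p : EuclideanSpace ℝ (Fin 2)) (r : ℝ) : EuclideanSpace ℝ (Fin 7) :=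
  (WithLp.equiv 2 (Fin 7 → ℝ)).symm
    ![p 0, p 1, p 0 * p 1, (p 0) ^ 2, (p 1) ^ 2, r, r ^ 2]

theorem le_add_iff_sub_sq_le_sq_or_le {α : Type*} [CommRing α] [LinearOrder α]
    [IsStrictOrderedRing α] {s d r : α} (hd : 0 ≤ d) :
    s ≤ d + r ↔ (s - r) ^ 2 ≤ d ^ 2 ∨ s ≤ r := by
  rcases le_or_gt s r with hsr | hrs
  · exact iff_of_true (by linarith) (Or.inr hsr)
  · rw [sq_le_sq₀ (sub_nonneg.2 hrs.le) hd, or_iff_left hrs.not_ge, sub_le_iff_le_add]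

theorem EuclideanSpace.dist_sq_fin_two (p q : EuclideanSpace ℝ (Fin 2)) :
    dist p q ^ 2 = (p 0 - q 0) ^ 2 + (p 1 - q 1) ^ 2 := by
  simp [EuclideanSpace.dist_sq_eq, Fin.sum_univ_two, Real.dist_eq, sq_abs]

theorem inner_toLp_phiLift (a b c d e f g : ℝ) (p : EuclideanSpace ℝ (Fin 2)) (r : ℝ) :
    ⟪!₂[a, b, c, d, e, f, g], phiLift p r⟫ =
      a * p 0 + b * p 1 + c * (p 0 * p 1) + d * p 0 ^ 2 + e * p 1 ^ 2 + f * r + g * r ^ 2 := by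
  simp only [phiLift, WithLp.equiv_symm_apply, PiLp.inner_apply, RCLike.inner_apply,
    Real.ringHom_apply, Fin.sum_univ_succ, Matrix.cons_val_zero, Matrix.cons_val_succ,
    Finset.univ_unique, Fin.default_eq_zero, Matrix.cons_val_fin_one, Finset.sum_const,
    Finset.card_singleton, one_smul]
  ring

theorem disk_classifier_halfspaces_general (q : EuclideanSpace ℝ (Fin 2)) (s : ℝ) :
    ∃ (w₁ w₂ : EuclideanSpace ℝ (Fin 7)) (b₁ b₂ : ℝ),
      ∀ (p : EuclideanSpace ℝ (Fin 2)) (r : ℝ), 0 ≤ r →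
        (s ≤ dist p q + r ↔ b₁ ≤ ⟪w₁, phiLift p r⟫ ∨ b₂ ≤ ⟪w₂, phiLift p r⟫) := by
  refine ⟨!₂[-2 * q 0, -2 * q 1, 0, 1, 1, 2 * s, -1], !₂[0, 0, 0, 0, 0, 1, 0],
    s ^ 2 - q 0 ^ 2 - q 1 ^ 2, s, fun p r _ => ?_⟩
  rw [le_add_iff_sub_sq_le_sq_or_le dist_nonneg, EuclideanSpace.dist_sq_fin_two,
    inner_toLp_phiLift, inner_toLp_phiLift]
  exact or_congr ⟨fun h => by linarith, fun h => by linarith⟩ (by simp)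

/-- For every circle `h = (q, s)` with `s > 0` there are vectors
`w₁, w₂ ∈ ℝ⁷` and reals `b₁, b₂` such that for every closed disk `d = (p, r)` with
`r ≥ 0`: `dist p q + r ≥ s` (i.e. `d ∈ 𝒟(h_≥)`) iff `⟨w₁, φ(p, r)⟩ ≥ b₁` or
`⟨w₂, φ(p, r)⟩ ≥ b₂`; i.e. under the lifting `φ` the classifier `𝒟(h_≥)` becomes a
union of two closed halfspaces of `ℝ⁷`. -/
theorem disk_classifier_halfspaces (q : EuclideanSpace ℝ (Fin 2)) (s : ℝ) (hs : 0 < s) :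
    ∃ (w₁ w₂ : EuclideanSpace ℝ (Fin 7)) (b₁ b₂ : ℝ),
      ∀ (p : EuclideanSpace ℝ (Fin 2)) (r : ℝ), 0 ≤ r →
        (s ≤ dist p q + r ↔ b₁ ≤ ⟪w₁, phiLift p r⟫ ∨ b₂ ≤ ⟪w₂, phiLift p r⟫) :=
  disk_classifier_halfspaces_general q s
end
end

section
/- The range spaces (𝒟, H_≤) and (𝒟, H_≥) have constant (finite) VC dimension: there exists n₀ ∈ ℕ such that every finite set of closed disks that is shattered by H_≤, and every finite set of closed disks that is shattered by H_≥, has cardinality at most n₀. -/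
noncomputable section

/-- The ground set `𝒟` of closed disks in the plane: pairs `(center, radius)`
with radius `≥ 0`. -/
def Ddisks : Set (EuclideanSpace ℝ (Fin 2) × ℝ) := {d | 0 ≤ d.2}

/-- `𝒟(h_≥)` for the circle `h = (q, s)`: the disks lying outside `h` or
intersecting the boundary of `h`. -/
def Dge (q : EuclideanSpace ℝ (Fin 2)) (s : ℝ) : Set (EuclideanSpace ℝ (Fin 2) × ℝ) :=
  {d | d ∈ Ddisks ∧ s ≤ dist d.1 q + d.2}

/-- `𝒟(h_≤)` for the circle `h = (q, s)`: the disks lying inside `h` or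
intersecting the boundary of `h`. -/
def Dle (q : EuclideanSpace ℝ (Fin 2)) (s : ℝ) : Set (EuclideanSpace ℝ (Fin 2) × ℝ) :=
  {d | d ∈ Ddisks ∧ dist d.1 q - d.2 ≤ s}

/-- The family `H_≥ = {𝒟(h_≥) : h a circle}`. -/
def Hge : Set (Set (EuclideanSpace ℝ (Fin 2) × ℝ)) :=
  {f | ∃ q s, 0 < s ∧ f = Dge q s}

/-- The family `H_≤ = {𝒟(h_≤) : h a circle}`. -/
def Hle : Set (Set (EuclideanSpace ℝ (Fin 2) × ℝ)) :=
  {f | ∃ q s, 0 < s ∧ f = Dle q s}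

/-- A family `F` of subsets of a ground set shatters `Y` if every subset of `Y` is
cut out by some member of `F`. -/
def Shatters {X : Type*} (F : Set (Set X)) (Y : Set X) : Prop :=
  ∀ S ⊆ Y, ∃ f ∈ F, f ∩ Y = S

/-!
Lifting a disk `(p, r)` to `ψ(p, r) = (p₀, p₁, r, ‖p‖² - r², 1) ∈ ℝ⁵` linearises the geometry:
`dist(p, q) - r ≤ s` becomes `(s + r)² - dist(p, q)² ≥ 0`, a linear inequality in `ψ(p, r)`,
and `s ≤ dist(p, q) + r` becomes `r - s ≥ 0 ∨ dist(p, q)² - (s - r)² ≥ 0`, a union of two.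
Pullbacks of half-spaces along a map into an `n`-dimensional space shatter at most `n` points
(a linear dependence among the lifted points cannot match the sign pattern of its
coefficients), so `H_≤` shatters at most 5 disks. For `H_≥`, by Sauer–Shelah–Pajor the
half-spaces leave at most `∑_{k ≤ 5} C(n, k)` traces on `n` disks, so unions of two leave at
most the square of that, which is less than `2ⁿ` for `n = 39`.
-/

open Module

section Shattering

variable {X : Type*} {F G : Set (Set X)} {Y Y' : Set X}

theorem Shatters.mono (hsub : Y' ⊆ Y) (h : Shatters F Y) : Shatters F Y' := by
  intro S hS
  obtain ⟨f, hf, hfY⟩ := h S (hS.trans hsub)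
  refine ⟨f, hf, ?_⟩
  rw [← Set.inter_eq_right.2 hsub, ← Set.inter_assoc, hfY, Set.inter_eq_left.2 hS]

theorem Shatters.of_forall_exists_inter_eq (h : Shatters F Y)
    (hFG : ∀ f ∈ F, ∃ g ∈ G, g ∩ Y = f ∩ Y) : Shatters G Y := by
  intro S hS
  obtain ⟨f, hf, rfl⟩ := h S hS
  exact hFG f hf

end Shattering

section Halfspaces

variable (𝕜 : Type*) [Field 𝕜] [LinearOrder 𝕜]
  {X E : Type*} [AddCommGroup E] [Module 𝕜 E]

def halfspaces (ψ : X → E) : Set (Set X) :=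
  Set.range fun ℓ : Dual 𝕜 E => {x | 0 ≤ ℓ (ψ x)}

variable {𝕜}

theorem setOf_dotProduct_nonneg_mem_halfspaces {ι : Type*} [Fintype ι] (ψ : X → ι → 𝕜)
    (c : ι → 𝕜) : {x | 0 ≤ c ⬝ᵥ ψ x} ∈ halfspaces 𝕜 ψ :=
  ⟨dotProductBilin 𝕜 𝕜 c, rfl⟩

variable [IsStrictOrderedRing 𝕜] {ψ : X → E} {Z : Finset X}

theorem not_shatters_halfspaces_of_sum_smul_eq_zero {g : X → 𝕜}
    (hg : ∑ x ∈ Z, g x • ψ x = 0) {j : X} (hj : j ∈ Z) (hgj : 0 < g j) :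
    ¬ Shatters (halfspaces 𝕜 ψ) ↑Z := by
  intro h
  obtain ⟨_, ⟨ℓ, rfl⟩, hℓ⟩ := h (↑Z ∩ {x | g x ≤ 0}) Set.inter_subset_left
  have hsign : ∀ x ∈ Z, (0 ≤ ℓ (ψ x) ↔ g x ≤ 0) := fun x hx => by
    simpa [hx] using Set.ext_iff.1 hℓ x
  have hneg : ∀ x ∈ Z, 0 < g x → g x * ℓ (ψ x) < 0 := fun x hx hpos =>
    mul_neg_of_pos_of_neg hpos (not_le.1 fun h => ((hsign x hx).1 h).not_gt hpos)
  have hnonpos : ∀ x ∈ Z, g x * ℓ (ψ x) ≤ 0 := fun x hx =>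
    (le_or_gt (g x) 0).elim (fun h => mul_nonpos_of_nonpos_of_nonneg h ((hsign x hx).2 h))
      (fun h => (hneg x hx h).le)
  have hzero : ∑ x ∈ Z, g x * ℓ (ψ x) = 0 := by
    simpa only [map_sum, map_smul, smul_eq_mul, map_zero] using congrArg ℓ hg
  have hlt : ∑ x ∈ Z, g x * ℓ (ψ x) < ∑ x ∈ Z, 0 :=
    Finset.sum_lt_sum hnonpos ⟨j, hj, hneg j hj hgj⟩
  simp [hzero] at hlt

theorem card_le_finrank_of_shatters_halfspaces [FiniteDimensional 𝕜 E]
    (h : Shatters (halfspaces 𝕜 ψ) ↑Z) : Z.card ≤ finrank 𝕜 E := by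
  by_contra hlt
  have hdep : ¬ LinearIndepOn 𝕜 ψ (Z : Set X) := fun hli =>
    hlt (by simpa using hli.fintype_card_le_finrank)
  obtain ⟨g, hg, j, hj, hgj⟩ := not_linearIndepOn_finset_iff.1 hdep
  rcases hgj.lt_or_gt with hneg | hpos
  · refine not_shatters_halfspaces_of_sum_smul_eq_zero (g := -g) ?_ hj (by simpa) h
    simp [neg_smul, Finset.sum_neg_distrib, hg]
  · exact not_shatters_halfspaces_of_sum_smul_eq_zero hg hj hpos h

end Halfspaces

section Traces

variable {X : Type*} {F : Set (Set X)} {Z : Finset X}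

open Classical in
def traces (F : Set (Set X)) (Z : Finset X) : Finset (Finset X) :=
  Z.powerset.filter fun A => ∃ f ∈ F, f ∩ ↑Z = ↑A

theorem mem_traces {A : Finset X} : A ∈ traces F Z ↔ A ⊆ Z ∧ ∃ f ∈ F, f ∩ ↑Z = ↑A := by
  classical
  simp [traces]

theorem exists_mem_traces {f : Set X} (hf : f ∈ F) : ∃ A ∈ traces F Z, ↑A = f ∩ ↑Z := by
  classical
  refine ⟨Z.filter (· ∈ f), ?_, ?_⟩
  · exact mem_traces.2 ⟨Finset.filter_subset _ _, f, hf, by ext; simp [and_comm]⟩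
  · ext; simp [and_comm]

theorem shatters_of_shatters_traces [DecidableEq X] {u : Finset X}
    (h : (traces F Z).Shatters u) : Shatters F ↑u := by
  intro S hS
  obtain ⟨t, rfl⟩ : ∃ t : Finset X, ↑t = S := ⟨(u.finite_toSet.subset hS).toFinset, by simp⟩
  obtain ⟨A, hA, huA⟩ := h (Finset.coe_subset.1 hS)
  obtain ⟨B, hB, huB⟩ := h.exists_superset
  obtain ⟨-, f, hf, hfA⟩ := mem_traces.1 hA
  have huZ : (u : Set X) ⊆ Z := Finset.coe_subset.2 (huB.trans (mem_traces.1 hB).1)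
  refine ⟨f, hf, ?_⟩
  rw [← Set.inter_eq_right.2 huZ, ← Set.inter_assoc, hfA, Set.inter_comm, ← Finset.coe_inter,
    huA]

theorem card_traces_le [DecidableEq X] {d : ℕ}
    (hF : ∀ u : Finset X, Shatters F ↑u → u.card ≤ d) :
    (traces F Z).card ≤ ∑ k ∈ Finset.range (d + 1), Z.card.choose k := by
  have hsub : (traces F Z).shatterer ⊆ (Finset.range (d + 1)).biUnion Z.powersetCard := by
    intro u hu
    rw [Finset.mem_shatterer] at hu
    obtain ⟨A, hA, huA⟩ := hu.exists_superset
    simp only [Finset.mem_biUnion, Finset.mem_range, Finset.mem_powersetCard]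
    exact ⟨u.card, Nat.lt_succ_of_le (hF u (shatters_of_shatters_traces hu)),
      huA.trans (mem_traces.1 hA).1, rfl⟩
  calc (traces F Z).card ≤ (traces F Z).shatterer.card := Finset.card_le_card_shatterer _
    _ ≤ ((Finset.range (d + 1)).biUnion Z.powersetCard).card := Finset.card_le_card hsub
    _ ≤ ∑ k ∈ Finset.range (d + 1), (Z.powersetCard k).card := Finset.card_biUnion_le
    _ = ∑ k ∈ Finset.range (d + 1), Z.card.choose k := by simp only [Finset.card_powersetCard]

theorem two_pow_card_le_sq_card_traces [DecidableEq X]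
    (h : Shatters (Set.image2 (· ∪ ·) F F) ↑Z) : 2 ^ Z.card ≤ (traces F Z).card ^ 2 := by
  have hsub : Z.powerset ⊆ (traces F Z ×ˢ traces F Z).image fun p => p.1 ∪ p.2 := by
    intro t ht
    obtain ⟨_, ⟨f, hf, g, hg, rfl⟩, hfg⟩ := h ↑t (Finset.coe_subset.2 (Finset.mem_powerset.1 ht))
    obtain ⟨A, hA, hAf⟩ := exists_mem_traces (Z := Z) hf
    obtain ⟨B, hB, hBg⟩ := exists_mem_traces (Z := Z) hg
    refine Finset.mem_image.2 ⟨(A, B), Finset.mem_product.2 ⟨hA, hB⟩, Finset.coe_inj.1 ?_⟩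
    rw [Finset.coe_union, hAf, hBg, ← Set.union_inter_distrib_right, hfg]
  calc 2 ^ Z.card = Z.powerset.card := (Finset.card_powerset Z).symm
    _ ≤ ((traces F Z ×ˢ traces F Z).image fun p => p.1 ∪ p.2).card := Finset.card_le_card hsub
    _ ≤ (traces F Z ×ˢ traces F Z).card := Finset.card_image_le
    _ = (traces F Z).card ^ 2 := by rw [Finset.card_product, sq]

theorem card_lt_of_shatters_image2_union [DecidableEq X] {d n : ℕ}
    (hF : ∀ u : Finset X, Shatters F ↑u → u.card ≤ d)
    (hn : (∑ k ∈ Finset.range (d + 1), n.choose k) ^ 2 < 2 ^ n)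
    (h : Shatters (Set.image2 (· ∪ ·) F F) ↑Z) : Z.card < n := by
  by_contra hle
  obtain ⟨t, htZ, rfl⟩ := Finset.exists_subset_card_eq (not_lt.1 hle)
  have htraces := two_pow_card_le_sq_card_traces (h.mono (Finset.coe_subset.2 htZ))
  exact hn.not_ge (htraces.trans (Nat.pow_le_pow_left (card_traces_le hF) 2))

end Traces

section Disks

variable (q : EuclideanSpace ℝ (Fin 2)) (s : ℝ) (d : EuclideanSpace ℝ (Fin 2) × ℝ)

def diskLift : Fin 5 → ℝ :=
  ![d.1 0, d.1 1, d.2, d.1 0 ^ 2 + d.1 1 ^ 2 - d.2 ^ 2, 1]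

theorem dist_sq_eq_fin_two (p : EuclideanSpace ℝ (Fin 2)) :
    dist p q ^ 2 = (p 0 - q 0) ^ 2 + (p 1 - q 1) ^ 2 := by
  rw [EuclideanSpace.dist_eq, Real.sq_sqrt (by positivity), Fin.sum_univ_two, Real.dist_eq,
    Real.dist_eq, sq_abs, sq_abs]

theorem dotProduct_diskLift_eq_sq_add_sub_dist_sq :
    ![2 * q 0, 2 * q 1, 2 * s, -1, s ^ 2 - q 0 ^ 2 - q 1 ^ 2] ⬝ᵥ diskLift d
      = (s + d.2) ^ 2 - dist d.1 q ^ 2 := by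
  rw [dist_sq_eq_fin_two]
  simp [diskLift, dotProduct, Fin.sum_univ_five]
  ring

theorem dotProduct_diskLift_eq_dist_sq_sub_sq :
    ![-2 * q 0, -2 * q 1, 2 * s, 1, q 0 ^ 2 + q 1 ^ 2 - s ^ 2] ⬝ᵥ diskLift d
      = dist d.1 q ^ 2 - (s - d.2) ^ 2 := by
  rw [dist_sq_eq_fin_two]
  simp [diskLift, dotProduct, Fin.sum_univ_five]
  ring

theorem dotProduct_diskLift_eq_sub : ![0, 0, 1, 0, -s] ⬝ᵥ diskLift d = d.2 - s := by
  simp [diskLift, dotProduct, Fin.sum_univ_five]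
  ring

variable {q s}

theorem Dle_eq_Ddisks_inter (hs : 0 ≤ s) :
    Dle q s = Ddisks ∩
      {d | 0 ≤ ![2 * q 0, 2 * q 1, 2 * s, -1, s ^ 2 - q 0 ^ 2 - q 1 ^ 2] ⬝ᵥ diskLift d} := by
  ext d
  simp only [Dle, Ddisks, Set.mem_ofPred_eq, Set.mem_inter_iff,
    dotProduct_diskLift_eq_sq_add_sub_dist_sq, sub_nonneg]
  refine and_congr_right fun hd => ?_
  rw [sq_le_sq₀ dist_nonneg (by linarith), sub_le_iff_le_add, add_comm]

theorem Dge_eq_Ddisks_inter :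
    Dge q s = Ddisks ∩ ({d | 0 ≤ ![0, 0, 1, 0, -s] ⬝ᵥ diskLift d} ∪
      {d | 0 ≤ ![-2 * q 0, -2 * q 1, 2 * s, 1, q 0 ^ 2 + q 1 ^ 2 - s ^ 2] ⬝ᵥ diskLift d}) := by
  ext d
  simp only [Dge, Ddisks, Set.mem_ofPred_eq, Set.mem_inter_iff, Set.mem_union,
    dotProduct_diskLift_eq_sub, dotProduct_diskLift_eq_dist_sq_sub_sq, sub_nonneg]
  refine and_congr_right fun _ => ?_
  rcases le_or_gt s d.2 with hrs | hsr
  · exact iff_of_true (by linarith [dist_nonneg (x := d.1) (y := q)]) (Or.inl hrs)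
  · rw [or_iff_right hsr.not_ge, sq_le_sq₀ (by linarith) dist_nonneg, ← sub_le_iff_le_add]

end Disks

section Shattering

variable {Y : Set (EuclideanSpace ℝ (Fin 2) × ℝ)}

theorem shatters_halfspaces_of_shatters_Hle (hY : Y ⊆ Ddisks) (h : Shatters Hle Y) :
    Shatters (halfspaces ℝ diskLift) Y := by
  refine h.of_forall_exists_inter_eq ?_
  rintro _ ⟨q, s, hs, rfl⟩
  rw [Dle_eq_Ddisks_inter hs.le, Set.inter_comm Ddisks, Set.inter_assoc,
    Set.inter_eq_right.2 hY]
  exact ⟨_, setOf_dotProduct_nonneg_mem_halfspaces diskLift _, rfl⟩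

theorem shatters_image2_union_halfspaces_of_shatters_Hge (hY : Y ⊆ Ddisks)
    (h : Shatters Hge Y) :
    Shatters (Set.image2 (· ∪ ·) (halfspaces ℝ diskLift) (halfspaces ℝ diskLift)) Y := by
  refine h.of_forall_exists_inter_eq ?_
  rintro _ ⟨q, s, -, rfl⟩
  rw [Dge_eq_Ddisks_inter, Set.inter_comm Ddisks, Set.inter_assoc, Set.inter_eq_right.2 hY]
  exact ⟨_, Set.mem_image2_of_mem (setOf_dotProduct_nonneg_mem_halfspaces diskLift _)
    (setOf_dotProduct_nonneg_mem_halfspaces diskLift _), rfl⟩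

end Shattering

/-- The range spaces `(𝒟, H_≤)` and `(𝒟, H_≥)` have constant
(finite) VC dimension: there is `n₀ ∈ ℕ` such that every finite set of closed disks
shattered by `H_≤`, and every finite set of closed disks shattered by `H_≥`, has
cardinality at most `n₀`. -/
theorem vc_dim_Hle_Hge_finite :
    ∃ n₀ : ℕ, ∀ Y ⊆ Ddisks, Y.Finite →
      (Shatters Hle Y → Y.ncard ≤ n₀) ∧ (Shatters Hge Y → Y.ncard ≤ n₀) := by
  classical
  have hvc : ∀ u : Finset (EuclideanSpace ℝ (Fin 2) × ℝ),
      Shatters (halfspaces ℝ diskLift) ↑u → u.card ≤ 5 := fun u hu =>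
    (card_le_finrank_of_shatters_halfspaces hu).trans_eq (finrank_fin_fun ℝ)
  have hcount : (∑ k ∈ Finset.range (5 + 1), Nat.choose 39 k) ^ 2 < 2 ^ 39 := by
    simp [Finset.sum_range_succ, Nat.choose_eq_factorial_div_factorial, Nat.factorial]
  refine ⟨38, fun Y hYD hY => ?_⟩
  obtain ⟨Z, rfl⟩ := hY.exists_finset_coe
  rw [Set.ncard_coe_finset]
  exact ⟨fun h => (hvc Z (shatters_halfspaces_of_shatters_Hle hYD h)).trans (by norm_num),
    fun h => Nat.le_of_lt_succ (card_lt_of_shatters_image2_union hvc hcount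
      (shatters_image2_union_halfspaces_of_shatters_Hge hYD h))⟩
end
end

section
/- Let c₁ > 0, set c₅ = 5·(c₁ + 1/100) and c₄ = √12 · c₅. Let k, a, n > 0 be reals with c₄ · c₁ · √(k/a) ≤ 1/100, and let β be a real with 1/12 ≤ β ≤ 11/12. Then c₄ · (n + c₁·√(k·n)) · √k / √a − c₅·√(k·β·n) − c₅·√(k·(1−β)·n) + c₁·√(k·n) ≤ c₄ · n · √k / √a − c₅ · √(k·n). -/
/-! Writing `s = √(k n)`, the two subproblem terms add up to `c₅ (√β + √(1 - β)) s`, and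
for `β ∈ [1/12, 11/12]` one has `√β + √(1 - β) ≥ 6/5`. Since `c₅ / 5 = c₁ + 1/100` and the
smallness hypothesis bounds the cost `c₄ c₁ √(k/a) s` of the separator balls by `s / 100`,
the gain `c₅ (6/5 - 1) s` pays for the separator cost and the `c₁ s` intersected balls. -/

open Real

lemma sq_sqrt_add_sqrt_one_sub {β : ℝ} (h₀ : 0 ≤ β) (h₁ : β ≤ 1) :
    (√β + √(1 - β)) ^ 2 = 1 + 2 * √(β * (1 - β)) := by
  rw [add_sq, sq_sqrt h₀, sq_sqrt (by linarith), sqrt_mul h₀]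
  ring

lemma six_fifths_le_sqrt_add_sqrt_one_sub {β : ℝ} (hβ₁ : 1 / 12 ≤ β) (hβ₂ : β ≤ 11 / 12) :
    6 / 5 ≤ √β + √(1 - β) := by
  have hprod : 11 / 50 ≤ √(β * (1 - β)) :=
    le_sqrt_of_sq_le (by nlinarith [mul_nonneg (sub_nonneg.2 hβ₁) (sub_nonneg.2 hβ₂)])
  have hsq := sq_sqrt_add_sqrt_one_sub (β := β) (by linarith) (by linarith)
  nlinarith [sqrt_nonneg β, sqrt_nonneg (1 - β)]

lemma sqrt_mul_mul_eq_sqrt_mul (k n : ℝ) {x : ℝ} (hx : 0 ≤ x) :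
    √(k * (x * n)) = √x * √(k * n) := by
  rw [mul_left_comm, sqrt_mul hx]

theorem boundary_recurrence_induction_step_general
    (c₁ c₄ c₅ k a n β : ℝ) (hc₁ : 0 < c₁)
    (hc₅ : c₅ = 5 * (c₁ + 1 / 100))
    (hk : 0 < k)
    (hsmall : c₄ * c₁ * Real.sqrt (k / a) ≤ 1 / 100)
    (hβ₁ : 1 / 12 ≤ β) (hβ₂ : β ≤ 11 / 12) :
    c₄ * (n + c₁ * Real.sqrt (k * n)) * Real.sqrt k / Real.sqrt a
        - c₅ * Real.sqrt (k * (β * n)) - c₅ * Real.sqrt (k * ((1 - β) * n))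
        + c₁ * Real.sqrt (k * n)
      ≤ c₄ * n * Real.sqrt k / Real.sqrt a - c₅ * Real.sqrt (k * n) := by
  set s := √(k * n)
  set S := √β + √(1 - β)
  rw [sqrt_div hk.le] at hsmall
  have hsplit : c₅ * √(k * (β * n)) + c₅ * √(k * ((1 - β) * n)) = c₅ * S * s := by
    rw [sqrt_mul_mul_eq_sqrt_mul k n (by linarith), sqrt_mul_mul_eq_sqrt_mul k n (by linarith)]
    ring
  have hgain : c₅ * (6 / 5) ≤ c₅ * S :=
    mul_le_mul_of_nonneg_left (six_fifths_le_sqrt_add_sqrt_one_sub hβ₁ hβ₂) (by linarith)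
  have hcoef : c₄ * c₁ * (√k / √a) + c₁ + c₅ ≤ c₅ * S := by linarith
  calc c₄ * (n + c₁ * s) * √k / √a - c₅ * √(k * (β * n)) - c₅ * √(k * ((1 - β) * n)) + c₁ * s
      = c₄ * n * √k / √a + (c₄ * c₁ * (√k / √a) + c₁) * s - c₅ * S * s := by
        rw [sub_sub, hsplit]; ring
    _ ≤ c₄ * n * √k / √a - c₅ * s := by
        linarith [mul_le_mul_of_nonneg_right hcoef (sqrt_nonneg (k * n))]

/-- The induction step of the boundary-ball recurrence bound: with
`c₅ = 5·(c₁ + 1/100)`, `c₄ = √12 · c₅`, `c₄·c₁·√(k/a) ≤ 1/100` and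
`1/12 ≤ β ≤ 11/12`, one has
`c₄·(n + c₁·√(k·n))·√k/√a − c₅·√(k·β·n) − c₅·√(k·(1−β)·n) + c₁·√(k·n)
  ≤ c₄·n·√k/√a − c₅·√(k·n)`. -/
theorem boundary_recurrence_induction_step
    (c₁ c₄ c₅ k a n β : ℝ) (hc₁ : 0 < c₁)
    (hc₅ : c₅ = 5 * (c₁ + 1 / 100)) (hc₄ : c₄ = Real.sqrt 12 * c₅)
    (hk : 0 < k) (ha : 0 < a) (hn : 0 < n)
    (hsmall : c₄ * c₁ * Real.sqrt (k / a) ≤ 1 / 100)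
    (hβ₁ : 1 / 12 ≤ β) (hβ₂ : β ≤ 11 / 12) :
    c₄ * (n + c₁ * Real.sqrt (k * n)) * Real.sqrt k / Real.sqrt a
        - c₅ * Real.sqrt (k * (β * n)) - c₅ * Real.sqrt (k * ((1 - β) * n))
        + c₁ * Real.sqrt (k * n)
      ≤ c₄ * n * Real.sqrt k / Real.sqrt a - c₅ * Real.sqrt (k * n) :=
  boundary_recurrence_induction_step_general c₁ c₄ c₅ k a n β hc₁ hc₅ hk hsmall hβ₁ hβ₂
end

section
/- Let X be a finite nonempty set, Y ⊆ X a finite nonempty subset, and h an arbitrary set; write X̄(h) = |h ∩ X| / |X| and Ȳ(h) = |h ∩ Y| / |Y|. Let 0 < p < 1 and 0 < ε < 1, and suppose the relative (p, ε)-approximation condition holds for h: if X̄(h) ≥ p then (1−ε)·X̄(h) ≤ Ȳ(h) ≤ (1+ε)·X̄(h), and if X̄(h) < p then X̄(h) − ε·p ≤ Ȳ(h) ≤ X̄(h) + ε·p. Then for every t > 0: if Ȳ(h) ≤ t·p, then X̄(h) ≤ max(p, t·p/(1−ε)). -/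
noncomputable section

/-- The paper's `X̄(h)`. Since `Set.ncard` is `0` on infinite sets, this is `0` unless `X` is
finite and nonempty. -/
def meas {α : Type*} (h X : Set α) : ℝ := ((h ∩ X).ncard : ℝ) / (X.ncard : ℝ)

theorem le_max_div_one_sub_of_one_sub_mul_le {𝕜 : Type*} [Field 𝕜] [LinearOrder 𝕜]
    [IsStrictOrderedRing 𝕜] {a b c p ε : 𝕜} (hε : ε < 1)
    (hlower : p ≤ a → (1 - ε) * a ≤ b) (hb : b ≤ c) :
    a ≤ max p (c / (1 - ε)) := by
  rcases lt_or_ge a p with hap | hpa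
  · exact le_max_of_le_left hap.le
  · refine le_max_of_le_right ((le_div_iff₀ (sub_pos.mpr hε)).mpr ?_)
    calc a * (1 - ε) = (1 - ε) * a := mul_comm _ _
      _ ≤ b := hlower hpa
      _ ≤ c := hb

theorem relative_approx_transfer_general {α : Type*}
    (X Y h : Set α)
    (p ε : ℝ) (hε1 : ε < 1)
    (happrox_ge : p ≤ meas h X →
      (1 - ε) * meas h X ≤ meas h Y ∧ meas h Y ≤ (1 + ε) * meas h X) :
    ∀ t : ℝ, 0 < t → meas h Y ≤ t * p → meas h X ≤ max p (t * p / (1 - ε)) :=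
  fun _ _ hY => le_max_div_one_sub_of_one_sub_mul_le hε1 (fun hp => (happrox_ge hp).1) hY

/-- If `Y ⊆ X` satisfies the relative `(p, ε)`-approximation
condition for a classifier `h`, then an upper bound `Ȳ(h) ≤ t·p` on the sample
measure implies `X̄(h) ≤ max(p, t·p/(1−ε))`. -/
theorem relative_approx_transfer {α : Type*}
    (X Y h : Set α) (hXfin : X.Finite) (hXne : X.Nonempty)
    (hYX : Y ⊆ X) (hYne : Y.Nonempty)
    (p ε : ℝ) (hp0 : 0 < p) (hp1 : p < 1) (hε0 : 0 < ε) (hε1 : ε < 1)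
    (happrox_ge : p ≤ meas h X →
      (1 - ε) * meas h X ≤ meas h Y ∧ meas h Y ≤ (1 + ε) * meas h X)
    (happrox_lt : meas h X < p →
      meas h X - ε * p ≤ meas h Y ∧ meas h Y ≤ meas h X + ε * p) :
    ∀ t : ℝ, 0 < t → meas h Y ≤ t * p → meas h X ≤ max p (t * p / (1 - ε)) :=
  relative_approx_transfer_general X Y h p ε hε1 happrox_ge
end
end
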